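/- Define h₁ as in the paper (h₁ = 1 on (-∞,0], 1/2 on (0,1], 1/(2x²) on [1,√2), g on [√2,√3], h on [√3,∞), with g(x) = (c₁/250)(251Φ̄(x)+φ(x)), h = c₂Φ̄, c₁ = 1/(4Φ̄(√2)), c₂ = c₁(1+(1+r(√3))/250)). For every a ∈ [0,1) and x ≥ √3, with u = (x-a)/√(1-a²) and v = (x+a)/√(1-a²), one has h₁(u) + h₁(v) - 2h₁(x) ≤ 0. -/

import Mathlib

/-! For `x ≥ √3` both `u` and `v` are `≥ √2`, where `h₁ ≤ h = c₂ Φ̄`, while `h₁ x = h x`: indeed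
`g ≤ h` on `(-∞, √3]` because the Mills ratio is increasing, and `c₂` is exactly the constant making
`g √3 = h √3`. It therefore suffices that `F a = Φ̄ u + Φ̄ v` is nonincreasing on `[0, 1)`, with
`F 0 = 2 Φ̄ x`. The derivative `F'` has the sign of `-(φ u (a x - 1) + φ v (a x + 1))`, and
`φ v = φ u · exp (-2 a x / (1 - a²))` with `3 a² ≤ (a x)²`; for `t = a x < 1` this reduces to
`exp (6 t / (3 - t²)) ≤ (1 + t) / (1 - t)`, which follows by comparing the series
`6 t / (3 - t²) = ∑ 2 t^(2k+1) / 3^k` and `log ((1 + t) / (1 - t)) = ∑ 2 t^(2k+1) / (2k + 1)`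
term by term. -/

open MeasureTheory Real Set

noncomputable def phi (x : ℝ) : ℝ := Real.exp (-x^2/2) / Real.sqrt (2*Real.pi)
noncomputable def Phibar (x : ℝ) : ℝ := ∫ u in Set.Ioi x, phi u
noncomputable def mills (x : ℝ) : ℝ := phi x / Phibar x
noncomputable def c1 : ℝ := 1 / (4 * Phibar (Real.sqrt 2))
noncomputable def c2 : ℝ := c1 * (1 + (1 + mills (Real.sqrt 3))/250)
noncomputable def g (x : ℝ) : ℝ := c1/250 * (251 * Phibar x + phi x)
noncomputable def h (x : ℝ) : ℝ := c2 * Phibar x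

noncomputable def h1 (x : ℝ) : ℝ :=
  if x ≤ 0 then 1
  else if x ≤ 1 then 1/2
  else if x < Real.sqrt 2 then 1/(2*x^2)
  else if x ≤ Real.sqrt 3 then g x
  else h x

open Filter Topology

lemma phi_eq_gaussianPDFReal : phi = ProbabilityTheory.gaussianPDFReal 0 1 := by
  ext x
  simp [phi, ProbabilityTheory.gaussianPDFReal, div_eq_inv_mul]

lemma phi_pos (x : ℝ) : 0 < phi x := by
  unfold phi; positivity

lemma continuous_phi : Continuous phi := by
  unfold phi; fun_prop

lemma integrable_phi : Integrable phi :=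
  phi_eq_gaussianPDFReal ▸ ProbabilityTheory.integrable_gaussianPDFReal 0 1

lemma hasDerivAt_phi (x : ℝ) : HasDerivAt phi (-x * phi x) x := by
  have hexponent : HasDerivAt (fun t : ℝ => -t ^ 2 / 2) (-x) x := by
    simpa [neg_div] using (hasDerivAt_pow 2 x).neg.div_const 2
  unfold phi
  exact (hexponent.exp.div_const (√(2 * π))).congr_deriv (by ring)

lemma phi_eq_phi_mul_exp (p q : ℝ) : phi q = phi p * exp (-(q ^ 2 - p ^ 2) / 2) := by
  simp only [phi, div_mul_eq_mul_div, ← exp_add]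
  ring_nf

lemma integrable_mul_phi : Integrable fun t => t * phi t := by
  convert (integrable_mul_exp_neg_mul_sq (b := 1 / 2) (by norm_num)).div_const (√(2 * π))
    using 2 with t
  simp only [phi]; ring_nf

lemma tendsto_phi_atTop : Tendsto phi atTop (𝓝 0) :=
  tendsto_zero_of_hasDerivAt_of_integrableOn_Ioi (a := 0) (fun x _ => hasDerivAt_phi x)
    (by simpa [neg_mul] using integrable_mul_phi.neg.integrableOn)
    integrable_phi.integrableOn

lemma integral_Ioi_mul_phi (x : ℝ) : ∫ t in Ioi x, t * phi t = phi x := by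
  simpa using integral_Ioi_of_hasDerivAt_of_tendsto' (a := x) (f := fun t => -phi t) (m := 0)
    (fun t _ => (hasDerivAt_phi t).neg) (by simpa using integrable_mul_phi.integrableOn)
    (by simpa using tendsto_phi_atTop.neg)

lemma Phibar_eq_sub_integral (x : ℝ) : Phibar x = Phibar 0 - ∫ t in (0 : ℝ)..x, phi t := by
  rw [← intervalIntegral.integral_Ioi_sub_Ioi' integrable_phi.integrableOn
    integrable_phi.integrableOn, Phibar, Phibar, sub_sub_cancel]

lemma hasDerivAt_Phibar (x : ℝ) : HasDerivAt Phibar (-phi x) x := by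
  rw [show Phibar = fun y => Phibar 0 - ∫ t in (0 : ℝ)..y, phi t from funext Phibar_eq_sub_integral]
  exact (intervalIntegral.integral_hasDerivAt_right integrable_phi.intervalIntegrable
    (continuous_phi.stronglyMeasurableAtFilter _ _) continuous_phi.continuousAt).const_sub _

lemma Phibar_pos (x : ℝ) : 0 < Phibar x := by
  calc 0 < ∫ t in x..x + 1, phi t :=
        intervalIntegral.intervalIntegral_pos_of_pos integrable_phi.intervalIntegrable phi_pos
          (by linarith)
    _ ≤ Phibar x := by
        rw [intervalIntegral.integral_of_le (by linarith)]
        exact setIntegral_mono_set integrable_phi.integrableOn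
          (.of_forall fun t => (phi_pos t).le) (.of_forall Ioc_subset_Ioi_self)

lemma mul_Phibar_le_phi (x : ℝ) : x * Phibar x ≤ phi x := by
  rw [← integral_Ioi_mul_phi x, Phibar, ← integral_const_mul]
  refine setIntegral_mono_on (integrable_phi.integrableOn.const_mul x)
    integrable_mul_phi.integrableOn measurableSet_Ioi fun t ht => ?_
  exact mul_le_mul_of_nonneg_right (le_of_lt ht) (phi_pos t).le

lemma monotone_mills : Monotone mills := by
  intro t b htb
  set f : ℝ → ℝ := fun u => phi b * Phibar u - phi u * Phibar b
  have hf (u : ℝ) : HasDerivAt f (phi u * (u * Phibar b - phi b)) u :=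
    (((hasDerivAt_Phibar u).const_mul (phi b)).sub
      ((hasDerivAt_phi u).mul_const (Phibar b))).congr_deriv (by ring)
  have hf_anti : AntitoneOn f (Iic b) := by
    refine antitoneOn_of_hasDerivWithinAt_nonpos (convex_Iic b)
      (fun u _ => (hf u).continuousAt.continuousWithinAt) (fun u _ => (hf u).hasDerivWithinAt)
      fun u hu => mul_nonpos_of_nonneg_of_nonpos (phi_pos u).le ?_
    rw [interior_Iic] at hu
    have := mul_le_mul_of_nonneg_right (le_of_lt hu) (Phibar_pos b).le
    linarith [mul_Phibar_le_phi b]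
  have hfb : f b ≤ f t := hf_anti htb self_mem_Iic htb
  rw [mills, mills, div_le_div_iff₀ (Phibar_pos t) (Phibar_pos b)]
  simp only [f, sub_self] at hfb
  linarith

lemma c1_pos : 0 < c1 := by
  have := Phibar_pos √2
  unfold c1; positivity

lemma g_eq_mul_Phibar (t : ℝ) : g t = c1 / 250 * (251 + mills t) * Phibar t := by
  rw [g, mills]; field_simp [(Phibar_pos t).ne']

lemma h_eq_mul_Phibar (t : ℝ) : h t = c1 / 250 * (251 + mills √3) * Phibar t := by
  rw [h, c2]; ring

lemma g_le_h {t : ℝ} (ht : t ≤ √3) : g t ≤ h t := by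
  have := c1_pos
  have := Phibar_pos t
  rw [g_eq_mul_Phibar, h_eq_mul_Phibar]
  gcongr
  exact monotone_mills ht

lemma g_sqrt_three : g √3 = h √3 := by
  rw [g_eq_mul_Phibar, h_eq_mul_Phibar]

lemma h1_eq_ite_of_sqrt_two_le {t : ℝ} (ht : √2 ≤ t) : h1 t = if t ≤ √3 then g t else h t := by
  have h1t : 1 < t := one_lt_sqrt_two.trans_le ht
  simp only [h1, if_neg (by linarith : ¬t ≤ 0), if_neg (not_le.2 h1t), if_neg (not_lt.2 ht)]

lemma h1_le_h {t : ℝ} (ht : √2 ≤ t) : h1 t ≤ h t := by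
  rw [h1_eq_ite_of_sqrt_two_le ht]
  split_ifs with ht3
  exacts [g_le_h ht3, le_rfl]

lemma h1_eq_h {t : ℝ} (ht : √3 ≤ t) : h1 t = h t := by
  rw [h1_eq_ite_of_sqrt_two_le ((sqrt_le_sqrt (by norm_num)).trans ht)]
  split_ifs with ht3
  · rw [le_antisymm ht3 ht, g_sqrt_three]
  · rfl

lemma six_mul_div_three_sub_sq_le_log {t : ℝ} (ht0 : 0 ≤ t) (ht1 : t < 1) :
    6 * t / (3 - t ^ 2) ≤ log (1 + t) - log (1 - t) := by
  have hr : t ^ 2 / 3 < 1 := by nlinarith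
  have hgeom := (hasSum_geometric_of_lt_one (by positivity) hr).mul_left (2 * t)
  rw [show 2 * t * (1 - t ^ 2 / 3)⁻¹ = 6 * t / (3 - t ^ 2) by field_simp; ring] at hgeom
  refine hasSum_le (fun k => ?_) hgeom
    (hasSum_log_sub_log_of_abs_lt_one (by rwa [abs_of_nonneg ht0]))
  have hk : (2 * k + 1 : ℝ) ≤ 3 ^ k := by
    have := one_add_mul_le_pow (a := (2 : ℝ)) (by norm_num) k
    norm_num at this; linarith
  rw [show t ^ (2 * k + 1) = (t ^ 2) ^ k * t by ring, div_pow]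
  have : 0 ≤ (t ^ 2) ^ k * t := by positivity
  field_simp
  nlinarith

lemma one_sub_le_one_add_mul_exp {s t : ℝ} (ht : 0 ≤ t) (hst : 3 * s ^ 2 ≤ t ^ 2)
    (hs : s ^ 2 < 1) : 1 - t ≤ (1 + t) * exp (-(2 * t / (1 - s ^ 2))) := by
  rcases le_or_gt 1 t with ht1 | ht1
  · have := (exp_pos (-(2 * t / (1 - s ^ 2)))).le
    nlinarith
  have hexp : 2 * t / (1 - s ^ 2) ≤ log (1 + t) - log (1 - t) :=
    calc 2 * t / (1 - s ^ 2) ≤ 6 * t / (3 - t ^ 2) := by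
          rw [div_le_div_iff₀ (by linarith) (by nlinarith)]; nlinarith
      _ ≤ _ := six_mul_div_three_sub_sq_le_log ht ht1
  have : 0 ≤ 1 + t := by linarith
  calc 1 - t = (1 + t) * exp (-(log (1 + t) - log (1 - t))) := by
        rw [exp_neg, exp_sub, exp_log (by linarith), exp_log (by linarith)]; field_simp
    _ ≤ _ := by gcongr

lemma phi_mul_add_phi_mul_nonneg {x s : ℝ} (hx : √3 ≤ x) (hs0 : 0 ≤ s) (hs1 : s < 1) :
    0 ≤ phi ((x - s) / √(1 - s ^ 2)) * (s * x - 1) +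
      phi ((x + s) / √(1 - s ^ 2)) * (s * x + 1) := by
  have hx3 : 3 ≤ x ^ 2 := by nlinarith [sq_sqrt (show (0 : ℝ) ≤ 3 by norm_num), sqrt_nonneg 3]
  have hs2 : 0 < 1 - s ^ 2 := by nlinarith
  set u := (x - s) / √(1 - s ^ 2)
  have hv : phi ((x + s) / √(1 - s ^ 2)) = phi u * exp (-(2 * (s * x) / (1 - s ^ 2))) := by
    rw [phi_eq_phi_mul_exp u]
    congr 2
    rw [div_pow, div_pow, sq_sqrt hs2.le]
    field_simp
    ring
  have := one_sub_le_one_add_mul_exp (s := s) (t := s * x)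
    (mul_nonneg hs0 ((sqrt_nonneg 3).trans hx)) (by nlinarith) (by nlinarith)
  rw [hv]
  nlinarith [mul_le_mul_of_nonneg_left this (phi_pos u).le]

lemma hasDerivAt_add_mul_div_sqrt_one_sub_sq (x c : ℝ) {s : ℝ} (hs : s ^ 2 < 1) :
    HasDerivAt (fun s => (x + c * s) / √(1 - s ^ 2))
      ((c + s * x) / ((1 - s ^ 2) * √(1 - s ^ 2))) s := by
  have hs2 : 0 < 1 - s ^ 2 := by linarith
  have hw : HasDerivAt (fun s : ℝ => √(1 - s ^ 2)) (-(2 * s) / (2 * √(1 - s ^ 2))) s := by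
    simpa using ((hasDerivAt_pow 2 s).const_sub 1).sqrt hs2.ne'
  have hnum : HasDerivAt (fun s => x + c * s) c s := by
    simpa using ((hasDerivAt_id s).const_mul c).const_add x
  refine (hnum.div hw (sqrt_pos.2 hs2).ne').congr_deriv ?_
  have := sq_sqrt hs2.le
  field_simp
  rw [this]
  ring

lemma Phibar_add_Phibar_le {a x : ℝ} (ha0 : 0 ≤ a) (ha1 : a < 1) (hx : √3 ≤ x) :
    Phibar ((x - a) / √(1 - a ^ 2)) + Phibar ((x + a) / √(1 - a ^ 2)) ≤ 2 * Phibar x := by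
  set F : ℝ → ℝ := fun s => Phibar ((x - s) / √(1 - s ^ 2)) + Phibar ((x + s) / √(1 - s ^ 2))
  have hF (s : ℝ) (hs : s ∈ Ico (0 : ℝ) 1) : HasDerivAt F
      (-(phi ((x - s) / √(1 - s ^ 2)) * (s * x - 1) + phi ((x + s) / √(1 - s ^ 2)) * (s * x + 1))
        / ((1 - s ^ 2) * √(1 - s ^ 2))) s := by
    have hs2 : s ^ 2 < 1 := by nlinarith [hs.1, hs.2]
    have hu : HasDerivAt (fun s => (x - s) / √(1 - s ^ 2))
        ((s * x - 1) / ((1 - s ^ 2) * √(1 - s ^ 2))) s := by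
      simpa [← sub_eq_add_neg, neg_add_eq_sub] using
        hasDerivAt_add_mul_div_sqrt_one_sub_sq x (-1) hs2
    have hv : HasDerivAt (fun s => (x + s) / √(1 - s ^ 2))
        ((s * x + 1) / ((1 - s ^ 2) * √(1 - s ^ 2))) s := by
      simpa [add_comm] using hasDerivAt_add_mul_div_sqrt_one_sub_sq x 1 hs2
    exact (((hasDerivAt_Phibar _).comp s hu).add ((hasDerivAt_Phibar _).comp s hv)).congr_deriv
      (by ring)
  have hF_anti : AntitoneOn F (Ico 0 1) := by
    refine antitoneOn_of_hasDerivWithinAt_nonpos (convex_Ico 0 1)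
      (fun s hs => (hF s hs).continuousAt.continuousWithinAt)
      (fun s hs => (hF s (interior_subset hs)).hasDerivWithinAt) fun s hs => ?_
    rw [interior_Ico] at hs
    have : 0 < 1 - s ^ 2 := by nlinarith [hs.1, hs.2]
    exact div_nonpos_of_nonpos_of_nonneg
      (neg_nonpos.2 (phi_mul_add_phi_mul_nonneg hx hs.1.le hs.2)) (by positivity)
  simpa [F, two_mul] using hF_anti ⟨le_rfl, zero_lt_one⟩ ⟨ha0, ha1⟩ ha0

lemma sqrt_two_le_sub_div_sqrt {a x : ℝ} (ha : a ^ 2 < 1) (hx : √3 ≤ x) :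
    √2 ≤ (x - a) / √(1 - a ^ 2) := by
  have h3 := sq_sqrt (show (0 : ℝ) ≤ 3 by norm_num)
  have ha1 : a < 1 := by nlinarith
  have h31 : 1 ≤ √3 := by nlinarith [sqrt_nonneg 3]
  have hxa : 0 ≤ x - a := by linarith
  rw [le_div_iff₀ (sqrt_pos.2 (by linarith)), ← sqrt_mul zero_le_two, ← sqrt_sq hxa]
  refine sqrt_le_sqrt ?_
  -- `(x - a)^2 ≥ (√3 - a)^2` and `(√3 - a)^2 - 2(1 - a^2) = (√3 a - 1)^2`
  nlinarith [mul_nonneg (sub_nonneg.2 hx) (by linarith : 0 ≤ x + √3 - 2 * a),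
    sq_nonneg (√3 * a - 1)]

lemma c2_pos : 0 < c2 := by
  have := c1_pos
  have := div_pos (phi_pos √3) (Phibar_pos √3)
  unfold c2 mills; positivity

lemma h_add_h_le {a x : ℝ} (ha0 : 0 ≤ a) (ha1 : a < 1) (hx : √3 ≤ x) :
    h ((x - a) / √(1 - a ^ 2)) + h ((x + a) / √(1 - a ^ 2)) ≤ 2 * h x := by
  simp only [h]
  linarith [mul_le_mul_of_nonneg_left (Phibar_add_Phibar_le ha0 ha1 hx) c2_pos.le]

theorem K_nonpos_large_x (a x : ℝ) (ha0 : 0 ≤ a) (ha1 : a < 1)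
    (hx : Real.sqrt 3 ≤ x) :
    h1 ((x - a) / Real.sqrt (1 - a^2)) + h1 ((x + a) / Real.sqrt (1 - a^2))
      - 2 * h1 x ≤ 0 := by
  have hu : √2 ≤ (x - a) / √(1 - a ^ 2) := sqrt_two_le_sub_div_sqrt (by nlinarith) hx
  have hv : √2 ≤ (x + a) / √(1 - a ^ 2) := hu.trans (by gcongr; linarith)
  rw [h1_eq_h hx]
  linarith [h1_le_h hu, h1_le_h hv, h_add_h_le ha0 ha1 hx]
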